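/- Let K be a locally compact Hausdorff space, X a Banach space, T : C₀(K) → C₀(L,X) a bounded linear operator, y ∈ L, and (f_n) a sequence in C₀(K) with 0 ≤ f_n ≤ 1 and pairwise disjoint supports. Then the map S : c₀ → X defined by S((a_n)_n) = T(Σ_n a_n f_n)(y) is a well-defined bounded linear operator with ‖S‖ ≤ ‖T‖. -/

import Mathlib

/-!
At each point of `K` at most one `fₙ` is nonzero, so a finite partial sum `∑ aₙ fₙ` takes at
every point a value `aₙ fₙ(x)` with `|aₙ fₙ(x)| ≤ |aₙ|`. Its sup norm is thus at most
`sup |aₙ|` over the indices summed. For `a ∈ c₀` this gives the Cauchy criterion for `∑ aₙ fₙ`,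
and in the limit `a ↦ ∑ aₙ fₙ` is a linear map `c₀ → C₀(K)` of norm at most `1`. Then `S` is
this map followed by `T` and by evaluation at `y`, each of norm at most `1` except `T`.
-/

open Topology ZeroAtInfty Filter Function

namespace ZeroAtInftyContinuousMap

section Eval

variable {α β : Type*} [TopologicalSpace α] [SeminormedAddCommGroup β]

lemma norm_apply_le (g : C₀(α, β)) (x : α) : ‖g x‖ ≤ ‖g‖ :=
  (g.toBCF.norm_coe_le_norm x).trans_eq norm_toBCF_eq_norm

variable (𝕜 : Type*) [NontriviallyNormedField 𝕜] [NormedSpace 𝕜 β]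

noncomputable def evalCLM (x : α) : C₀(α, β) →L[𝕜] β :=
  LinearMap.mkContinuous
    { toFun := fun g => g x
      map_add' := fun _ _ => rfl
      map_smul' := fun _ _ => rfl }
    1 fun g => (norm_apply_le g x).trans_eq (one_mul _).symm

lemma norm_evalCLM_le (x : α) : ‖(evalCLM 𝕜 x : C₀(α, β) →L[𝕜] β)‖ ≤ 1 :=
  LinearMap.mkContinuous_norm_le _ zero_le_one _

end Eval

lemma tendsto_cofinite_zero {ι β : Type*} [TopologicalSpace ι] [DiscreteTopology ι]
    [TopologicalSpace β] [Zero β] (a : C₀(ι, β)) : Tendsto a cofinite (𝓝 0) := by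
  simpa only [cocompact_eq_cofinite] using zero_at_infty a

section DisjointSupports

variable {K ι : Type*} [TopologicalSpace K] {f : ι → C₀(K, ℝ)}

lemma norm_sum_smul_le_of_pairwise_disjoint_support (hf : ∀ i x, |f i x| ≤ 1)
    (hdisj : Pairwise (Disjoint on fun i => support (f i))) (a : ι → ℝ) (t : Finset ι)
    {C : ℝ} (hC : 0 ≤ C) (ha : ∀ i ∈ t, |a i| ≤ C) :
    ‖∑ i ∈ t, a i • f i‖ ≤ C := by
  rw [← norm_toBCF_eq_norm]
  refine (BoundedContinuousFunction.norm_le hC).2 fun x => ?_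
  have hx : (∑ i ∈ t, a i • f i) x = ∑ i ∈ t, a i * f i x :=
    map_sum (evalCLM ℝ x) (fun i => a i • f i) t
  rw [toBCF_apply, hx, Real.norm_eq_abs]
  by_cases h : ∃ j ∈ t, f j x ≠ 0
  · obtain ⟨j, hjt, hj⟩ := h
    have hvanish : ∀ i ∈ t, i ≠ j → a i * f i x = 0 := fun i _ hij => by
      rw [notMem_support.1 fun hi => (hdisj hij).le_bot ⟨hi, hj⟩, mul_zero]
    rw [Finset.sum_eq_single_of_mem j hjt hvanish, abs_mul]
    calc |a j| * |f j x| ≤ C * 1 := mul_le_mul (ha j hjt) (hf j x) (abs_nonneg _) hC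
      _ = C := mul_one C
  · push Not at h
    rw [Finset.sum_eq_zero fun i hi => by rw [h i hi, mul_zero], abs_zero]
    exact hC

lemma summable_smul_of_pairwise_disjoint_support (hf : ∀ i x, |f i x| ≤ 1)
    (hdisj : Pairwise (Disjoint on fun i => support (f i))) {a : ι → ℝ}
    (ha : Tendsto a cofinite (𝓝 0)) : Summable fun i => a i • f i := by
  refine summable_iff_vanishing_norm.2 fun ε hε => ?_
  have hsmall : ∀ᶠ i in cofinite, |a i| < ε / 2 := by
    simpa only [Real.dist_eq, sub_zero] using
      (Metric.tendsto_nhds.1 ha) (ε / 2) (half_pos hε)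
  refine ⟨(eventually_cofinite.1 hsmall).toFinset, fun t ht => ?_⟩
  refine (norm_sum_smul_le_of_pairwise_disjoint_support hf hdisj a t (half_pos hε).le
    fun i hi => ?_).trans_lt (half_lt_self hε)
  exact (by simpa using Finset.disjoint_left.1 ht hi : |a i| < ε / 2).le

lemma norm_tsum_smul_le_of_pairwise_disjoint_support (hf : ∀ i x, |f i x| ≤ 1)
    (hdisj : Pairwise (Disjoint on fun i => support (f i))) {a : ι → ℝ}
    (ha : Tendsto a cofinite (𝓝 0)) {C : ℝ} (hC : 0 ≤ C) (haC : ∀ i, |a i| ≤ C) :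
    ‖∑' i, a i • f i‖ ≤ C :=
  have hsum := (summable_smul_of_pairwise_disjoint_support hf hdisj ha).hasSum
  le_of_tendsto' ((continuous_norm.tendsto _).comp hsum) fun t =>
    norm_sum_smul_le_of_pairwise_disjoint_support hf hdisj a t hC fun i _ => haC i

variable [TopologicalSpace ι] [DiscreteTopology ι]

noncomputable def seriesCLM (hf : ∀ i x, |f i x| ≤ 1)
    (hdisj : Pairwise (Disjoint on fun i => support (f i))) : C₀(ι, ℝ) →L[ℝ] C₀(K, ℝ) :=
  have hsum (a : C₀(ι, ℝ)) : Summable fun i => a i • f i :=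
    summable_smul_of_pairwise_disjoint_support hf hdisj a.tendsto_cofinite_zero
  LinearMap.mkContinuous
    { toFun := fun a => ∑' i, a i • f i
      map_add' := fun a b =>
        (tsum_congr fun i => add_smul (a i) (b i) (f i)).trans ((hsum a).tsum_add (hsum b))
      map_smul' := fun c a => by
        simp only [coe_smul, Pi.smul_apply, smul_eq_mul, mul_smul, RingHom.id_apply]
        exact (hsum a).tsum_const_smul c }
    1 fun a => by
      rw [one_mul]
      exact norm_tsum_smul_le_of_pairwise_disjoint_support hf hdisj a.tendsto_cofinite_zero
        (norm_nonneg a) fun i => norm_apply_le a i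

lemma hasSum_seriesCLM (hf : ∀ i x, |f i x| ≤ 1)
    (hdisj : Pairwise (Disjoint on fun i => support (f i))) (a : C₀(ι, ℝ)) :
    HasSum (fun i => a i • f i) (seriesCLM hf hdisj a) :=
  (summable_smul_of_pairwise_disjoint_support hf hdisj a.tendsto_cofinite_zero).hasSum

lemma norm_seriesCLM_le (hf : ∀ i x, |f i x| ≤ 1)
    (hdisj : Pairwise (Disjoint on fun i => support (f i))) :
    ‖(seriesCLM hf hdisj : C₀(ι, ℝ) →L[ℝ] C₀(K, ℝ))‖ ≤ 1 := by
  unfold seriesCLM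
  exact LinearMap.mkContinuous_norm_le _ zero_le_one _

end DisjointSupports

end ZeroAtInftyContinuousMap

open ZeroAtInftyContinuousMap

theorem stmt16_general {K L X : Type*}
    [TopologicalSpace K]
    [TopologicalSpace L]
    [NormedAddCommGroup X] [NormedSpace ℝ X]
    (T : C₀(K, ℝ) →L[ℝ] C₀(L, X)) (y : L)
    (f : ℕ → C₀(K, ℝ))
    (hf01 : ∀ n (x : K), 0 ≤ f n x ∧ f n x ≤ 1)
    (hdisj : Pairwise (Function.onFun Disjoint (fun n => Function.support (f n)))) :
    ∃ S : C₀(ℕ, ℝ) →L[ℝ] X, ‖S‖ ≤ ‖T‖ ∧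
      ∀ a : C₀(ℕ, ℝ), ∃ g : C₀(K, ℝ),
        HasSum (fun n => a n • f n) g ∧ S a = T g y := by
  have hf : ∀ n x, |f n x| ≤ 1 := fun n x => (abs_of_nonneg (hf01 n x).1).trans_le (hf01 n x).2
  let Φ : C₀(ℕ, ℝ) →L[ℝ] C₀(K, ℝ) := seriesCLM hf hdisj
  refine ⟨(evalCLM ℝ y).comp (T.comp Φ), ?_,
    fun a => ⟨Φ a, hasSum_seriesCLM hf hdisj a, rfl⟩⟩
  calc ‖(evalCLM ℝ y).comp (T.comp Φ)‖
      ≤ ‖(evalCLM ℝ y : C₀(L, X) →L[ℝ] X)‖ * (‖T‖ * ‖Φ‖) :=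
        (ContinuousLinearMap.opNorm_comp_le _ _).trans
          (mul_le_mul_of_nonneg_left (T.opNorm_comp_le Φ) (norm_nonneg _))
    _ ≤ 1 * (‖T‖ * 1) := by
        gcongr
        · exact norm_evalCLM_le ℝ y
        · exact norm_seriesCLM_le hf hdisj
    _ = ‖T‖ := by ring

/-- Given a bounded operator `T : C₀(K) → C₀(L,X)`, a point `y ∈ L`, and
functions `fₙ ∈ C₀(K)` with `0 ≤ fₙ ≤ 1` and pairwise disjoint supports, the map
`S : c₀ → X`, `S((aₙ)) = T(Σₙ aₙ fₙ)(y)` is a well-defined bounded linear operator with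
`‖S‖ ≤ ‖T‖` (the series `Σₙ aₙ fₙ` converging in `C₀(K)` for every `(aₙ) ∈ c₀`). -/
theorem stmt16 {K L X : Type*}
    [TopologicalSpace K] [LocallyCompactSpace K] [T2Space K]
    [TopologicalSpace L] [LocallyCompactSpace L] [T2Space L]
    [NormedAddCommGroup X] [NormedSpace ℝ X] [CompleteSpace X]
    (T : C₀(K, ℝ) →L[ℝ] C₀(L, X)) (y : L)
    (f : ℕ → C₀(K, ℝ))
    (hf01 : ∀ n (x : K), 0 ≤ f n x ∧ f n x ≤ 1)
    (hdisj : Pairwise (Function.onFun Disjoint (fun n => Function.support (f n)))) :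
    ∃ S : C₀(ℕ, ℝ) →L[ℝ] X, ‖S‖ ≤ ‖T‖ ∧
      ∀ a : C₀(ℕ, ℝ), ∃ g : C₀(K, ℝ),
        HasSum (fun n => a n • f n) g ∧ S a = T g y :=
  stmt16_general T y f hf01 hdisj
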